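/- Let m ≥ 1 and i ≥ 2 be integers and p ∈ (0,1). Define the sequence (D_t)_{t≥i} by D_i = m and D_{t+1} = D_t·(1 + (1-p)/(2t) - p·e_t) + p·m·c_t for t ≥ i. Then D_t = O(t^{(1-p)/2}·ln t) as t → ∞; that is, there exist a constant C > 0 and an integer T ≥ i such that D_t ≤ C·t^{(1-p)/2}·ln t for all t ≥ T. -/

import Mathlib

/-- `c_l = (2ml+1)/(l(2ml+1-2m))`. -/
noncomputable def cPAAPA (m l : ℕ) : ℝ :=
  (2 * (m : ℝ) * l + 1) / ((l : ℝ) * (2 * (m : ℝ) * l + 1 - 2 * m))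

/-- `e_l = m/(l(2ml+1-2m))`. -/
noncomputable def ePAAPA (m l : ℕ) : ℝ :=
  (m : ℝ) / ((l : ℝ) * (2 * (m : ℝ) * l + 1 - 2 * m))

/-!
Put `α = (1 - p) / 2` and `g r = r ^ α * log r`. Since `e_t ≥ 0` and `c_t ≤ 3 / t`, the recursion
gives `D (t + 1) ≤ D t * (1 + α / t) + 3 m / t`. The homogeneous part alone is matched by `r ^ α`;
the logarithm is what absorbs the forcing term: from `(1 + x) ^ α ≥ 1 + α x - x ^ 2` and
`log (r + 1) ≥ log r + 1 / (2 r)` one gets `g (r + 1) ≥ g r * (1 + α / r) + r ^ (α - 1) / 8` for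
`r ≥ 256`, and `B r ^ (α - 1) / 8 ≥ 3 m / r` once `B ≥ 24 m`. Hence `D t ≤ B g t` propagates by
induction from a large starting time.
-/

open Real

lemma one_add_mul_sub_sq_le_rpow_one_add {α x : ℝ} (hα0 : 0 < α) (hα1 : α < 1) (hx0 : 0 < x)
    (hx1 : x ≤ 1) : 1 + α * x - x ^ 2 ≤ (1 + x) ^ α := by
  have hpos : 0 < 1 + x := by linarith
  have hdual : (1 + x) ^ (1 - α) ≤ 1 + (1 - α) * x :=
    rpow_one_add_le_one_add_mul_self (by linarith) (by linarith) (by linarith)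
  have hsplit : (1 + x) ^ α * (1 + x) ^ (1 - α) = 1 + x := by
    rw [← rpow_add hpos]; simp
  refine le_of_mul_le_mul_right ?_ (show 0 < 1 + (1 - α) * x by nlinarith)
  calc (1 + α * x - x ^ 2) * (1 + (1 - α) * x) ≤ 1 + x := by
        nlinarith [mul_nonneg (sq_nonneg x) (sub_nonneg.2 hα1.le), sq_nonneg (α * x),
          mul_nonneg (pow_nonneg hx0.le 3) (sub_nonneg.2 hα1.le)]
    _ = (1 + x) ^ α * (1 + x) ^ (1 - α) := hsplit.symm
    _ ≤ (1 + x) ^ α * (1 + (1 - α) * x) :=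
        mul_le_mul_of_nonneg_left hdual (rpow_nonneg hpos.le α)

lemma log_le_div_eight {r : ℝ} (hr : 256 ≤ r) : log r ≤ r / 8 := by
  have hsqrt : 16 ≤ √r := le_sqrt_of_sq_le (by linarith)
  have hr_eq : √r * √r = r := mul_self_sqrt (by linarith)
  have hlog := log_le_rpow_div (x := r) (by linarith) one_half_pos
  rw [← sqrt_eq_rpow] at hlog
  nlinarith

lemma log_add_inv_two_mul_le_log_add_one {r : ℝ} (hr : 1 ≤ r) :
    log r + 1 / (2 * r) ≤ log (r + 1) := by
  have hr0 : 0 < r := by linarith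
  have hquot := one_sub_inv_le_log_of_pos (show 0 < (r + 1) / r by positivity)
  rw [log_div (by linarith) hr0.ne', inv_div] at hquot
  have h1 : 1 - r / (r + 1) = 1 / (r + 1) := by field_simp; ring
  have h2 : 1 / (2 * r) ≤ 1 / (r + 1) := one_div_le_one_div_of_le (by linarith) (by linarith)
  linarith

lemma rpow_mul_log_mul_one_add_add_le {α : ℝ} (hα0 : 0 < α) (hα1 : α < 1) {r : ℝ}
    (hr : 256 ≤ r) :
    r ^ α * log r * (1 + α / r) + r ^ α / r * (1 / 8) ≤ (r + 1) ^ α * log (r + 1) := by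
  have hr0 : 0 < r := by linarith
  have hrpow : r ^ α * (1 + α / r - 1 / r ^ 2) ≤ (r + 1) ^ α := by
    have hbern := one_add_mul_sub_sq_le_rpow_one_add hα0 hα1 (show 0 < 1 / r by positivity)
      (by rw [div_le_one hr0]; linarith)
    have hsplit : (r + 1) ^ α = r ^ α * (1 + 1 / r) ^ α := by
      rw [← mul_rpow hr0.le (by positivity)]
      congr 1
      field_simp
    rw [hsplit]
    refine mul_le_mul_of_nonneg_left ?_ (rpow_nonneg hr0.le α)
    calc 1 + α / r - 1 / r ^ 2 = 1 + α * (1 / r) - (1 / r) ^ 2 := by ring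
      _ ≤ _ := hbern
  have hfactors : log r * (1 + α / r) + 1 / r * (1 / 8)
      ≤ (1 + α / r - 1 / r ^ 2) * (log r + 1 / (2 * r)) := by
    have hdiff : (1 + α / r - 1 / r ^ 2) * (log r + 1 / (2 * r))
        - (log r * (1 + α / r) + 1 / r * (1 / 8))
        = (3 * r ^ 2 + 4 * α * r - 8 * r * log r - 4) / (8 * r ^ 3) := by
      field_simp
      ring
    have hnum : 0 ≤ 3 * r ^ 2 + 4 * α * r - 8 * r * log r - 4 := by
      nlinarith [mul_le_mul_of_nonneg_left (log_le_div_eight hr) hr0.le,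
        mul_nonneg hα0.le hr0.le]
    linarith [div_nonneg hnum (by positivity : (0 : ℝ) ≤ 8 * r ^ 3)]
  calc r ^ α * log r * (1 + α / r) + r ^ α / r * (1 / 8)
      = r ^ α * (log r * (1 + α / r) + 1 / r * (1 / 8)) := by ring
    _ ≤ r ^ α * ((1 + α / r - 1 / r ^ 2) * (log r + 1 / (2 * r))) :=
        mul_le_mul_of_nonneg_left hfactors (rpow_nonneg hr0.le α)
    _ = r ^ α * (1 + α / r - 1 / r ^ 2) * (log r + 1 / (2 * r)) := by ring
    _ ≤ (r + 1) ^ α * log (r + 1) :=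
        mul_le_mul hrpow (log_add_inv_two_mul_le_log_add_one (by linarith))
          (add_nonneg (log_nonneg (by linarith)) (by positivity)) (rpow_nonneg (by linarith) α)

lemma add_le_mul_rpow_mul_log_add_one {α K B x a b r : ℝ} (hα0 : 0 < α) (hα1 : α < 1)
    (hr : 256 ≤ r) (hB : 0 ≤ B) (hKB : 8 * K ≤ B) (hx : x ≤ B * r ^ α * log r) (ha0 : 0 ≤ a)
    (ha : a ≤ 1 + α / r) (hb : b ≤ K / r) :
    x * a + b ≤ B * (r + 1) ^ α * log (r + 1) := by
  have hr0 : 0 < r := by linarith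
  have hrpow : 1 ≤ r ^ α := one_le_rpow (by linarith) hα0.le
  have hBg : 0 ≤ B * r ^ α * log r :=
    mul_nonneg (mul_nonneg hB (rpow_nonneg hr0.le α)) (log_nonneg (by linarith))
  have hKr : b ≤ B * (r ^ α / r) * (1 / 8) := by
    calc b ≤ K / r := hb
      _ ≤ (B * r ^ α / 8) / r := div_le_div_of_nonneg_right (by nlinarith) hr0.le
      _ = B * (r ^ α / r) * (1 / 8) := by ring
  calc x * a + b ≤ B * r ^ α * log r * (1 + α / r) + B * (r ^ α / r) * (1 / 8) :=
        add_le_add (mul_le_mul hx ha ha0 hBg) hKr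
    _ = B * (r ^ α * log r * (1 + α / r) + r ^ α / r * (1 / 8)) := by ring
    _ ≤ B * ((r + 1) ^ α * log (r + 1)) :=
        mul_le_mul_of_nonneg_left (rpow_mul_log_mul_one_add_add_le hα0 hα1 hr) hB
    _ = B * (r + 1) ^ α * log (r + 1) := by ring

lemma exists_le_mul_rpow_mul_log_of_le_mul_add {α K : ℝ} (hα0 : 0 < α) (hα1 : α < 1)
    {u a b : ℕ → ℝ} {T₀ : ℕ} (hu : ∀ t, T₀ ≤ t → u (t + 1) ≤ u t * a t + b t)
    (ha0 : ∀ t, T₀ ≤ t → 0 ≤ a t) (ha : ∀ t, T₀ ≤ t → a t ≤ 1 + α / t)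
    (hb : ∀ t, T₀ ≤ t → b t ≤ K / t) :
    ∃ C : ℝ, 0 < C ∧ ∃ T : ℕ, T₀ ≤ T ∧ ∀ t, T ≤ t → u t ≤ C * (t : ℝ) ^ α * log t := by
  set T := max T₀ 256
  have hT : (256 : ℝ) ≤ T := by exact_mod_cast le_max_right T₀ 256
  have hgT : 0 < (T : ℝ) ^ α * log T :=
    mul_pos (rpow_pos_of_pos (by linarith) α) (log_pos (by linarith))
  set B := max (8 * K) ((|u T| + 1) / ((T : ℝ) ^ α * log T))
  have hB : 0 < B := lt_max_of_lt_right (by positivity)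
  refine ⟨B, hB, T, le_max_left _ _, fun t ht => ?_⟩
  induction t, ht using Nat.le_induction with
  | base =>
    have hbase : |u T| + 1 ≤ B * ((T : ℝ) ^ α * log T) :=
      (div_le_iff₀ hgT).1 (le_max_right _ _)
    linarith [le_abs_self (u T)]
  | succ t ht ih =>
    have hT₀ : T₀ ≤ t := (le_max_left _ _).trans ht
    have htr : (256 : ℝ) ≤ t := hT.trans (by exact_mod_cast ht)
    push_cast
    exact (hu t hT₀).trans <| add_le_mul_rpow_mul_log_add_one hα0 hα1 htr hB.le
      (le_max_left _ _) ih (ha0 t hT₀) (ha t hT₀) (hb t hT₀)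

section Coefficients

variable (m : ℕ) {t : ℕ}

lemma pAAPA_denom_pos (ht : 1 ≤ t) : 0 < (t : ℝ) * (2 * (m : ℝ) * t + 1 - 2 * m) := by
  have ht' : (1 : ℝ) ≤ t := by exact_mod_cast ht
  have : 0 ≤ 2 * (m : ℝ) * (t - 1) := by positivity
  nlinarith

lemma ePAAPA_nonneg (ht : 1 ≤ t) : 0 ≤ ePAAPA m t :=
  div_nonneg m.cast_nonneg (pAAPA_denom_pos m ht).le

lemma ePAAPA_le_one (ht : 2 ≤ t) : ePAAPA m t ≤ 1 := by
  have ht' : (2 : ℝ) ≤ t := by exact_mod_cast ht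
  rw [ePAAPA, div_le_one (pAAPA_denom_pos m (by omega))]
  nlinarith [mul_le_mul_of_nonneg_left (show (2 : ℝ) ≤ 2 * t * (t - 1) by nlinarith)
    m.cast_nonneg]

lemma cPAAPA_nonneg (ht : 1 ≤ t) : 0 ≤ cPAAPA m t :=
  div_nonneg (by positivity) (pAAPA_denom_pos m ht).le

lemma cPAAPA_le_three_div (ht : 2 ≤ t) : cPAAPA m t ≤ 3 / t := by
  have ht' : (2 : ℝ) ≤ t := by exact_mod_cast ht
  rw [cPAAPA, div_le_div_iff₀ (pAAPA_denom_pos m (by omega)) (by positivity)]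
  nlinarith [mul_nonneg (mul_nonneg m.cast_nonneg (by positivity : (0 : ℝ) ≤ t))
    (by linarith : (0 : ℝ) ≤ t - 2)]

end Coefficients

theorem pa_apa_mixed_expected_degree_growth_general (m i : ℕ)
    (p : ℝ) (hp0 : 0 < p) (hp1 : p < 1) (D : ℕ → ℝ)
    (hrec : ∀ t, i ≤ t →
      D (t + 1) = D t * (1 + (1 - p) / (2 * (t : ℝ)) - p * ePAAPA m t)
        + p * (m : ℝ) * cPAAPA m t) :
    ∃ C : ℝ, 0 < C ∧ ∃ T : ℕ, i ≤ T ∧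
      ∀ t, T ≤ t → D t ≤ C * (t : ℝ) ^ ((1 - p) / 2) * Real.log t := by
  obtain ⟨C, hC, T, hT, hD⟩ := exists_le_mul_rpow_mul_log_of_le_mul_add
    (α := (1 - p) / 2) (K := 3 * m) (T₀ := max i 2) (by linarith) (by linarith)
    (fun t ht => (hrec t (le_of_max_le_left ht)).le)
    (fun t ht => by
      have := ePAAPA_le_one m (le_of_max_le_right ht)
      have := ePAAPA_nonneg m (t := t) (by omega)
      have : 0 ≤ (1 - p) / (2 * (t : ℝ)) := by positivity
      nlinarith)
    (fun t ht => by
      have := mul_nonneg hp0.le (ePAAPA_nonneg m (t := t) (by omega))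
      have : (1 - p) / (2 * (t : ℝ)) = (1 - p) / 2 / t := by ring
      linarith)
    (fun t ht => by
      have hc := cPAAPA_le_three_div m (le_of_max_le_right ht)
      calc p * m * cPAAPA m t ≤ 1 * m * cPAAPA m t :=
            mul_le_mul_of_nonneg_right (by gcongr) (cPAAPA_nonneg m (by omega))
        _ ≤ m * (3 / t) := by rw [one_mul]; gcongr
        _ = 3 * m / t := by ring)
  exact ⟨C, hC, T, (le_max_left i 2).trans hT, hD⟩

/-- Theorem 3.8 of the paper: in the mixed PA-APA model with parameter `p ∈ (0,1)`
the expected degree `D_t` of vertex `v_i`, which satisfies the displayed recursion,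
grows at most like `t^{(1-p)/2} ln t`. -/
theorem pa_apa_mixed_expected_degree_growth (m i : ℕ) (hm : 1 ≤ m) (hi : 2 ≤ i)
    (p : ℝ) (hp0 : 0 < p) (hp1 : p < 1) (D : ℕ → ℝ)
    (hstart : D i = (m : ℝ))
    (hrec : ∀ t, i ≤ t →
      D (t + 1) = D t * (1 + (1 - p) / (2 * (t : ℝ)) - p * ePAAPA m t)
        + p * (m : ℝ) * cPAAPA m t) :
    ∃ C : ℝ, 0 < C ∧ ∃ T : ℕ, i ≤ T ∧
      ∀ t, T ≤ t → D t ≤ C * (t : ℝ) ^ ((1 - p) / 2) * Real.log t :=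
  pa_apa_mixed_expected_degree_growth_general m i p hp0 hp1 D hrec
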